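/- Let f_w be an l-layer GCN (l ≥ 2) with weight matrices W_1,…,W_l, but with an arbitrary matrix P ∈ ℝ^{n×n} in place of the graph Laplacian, and input graph G with feature matrix X ∈ ℝ^{n×h_0}. Then the network output satisfies ‖f_w(G)‖₂ ≤ (1/√n) · ‖X‖_F · ‖P‖₂^{l−1} · ∏_{i=1}^l ‖W_i‖₂. -/

import Mathlib

open MeasureTheory Matrix Finset

noncomputable section

/-- Spectral norm of a real matrix: the operator norm induced by Euclidean vector norms. -/
def specNorm {m n : Type*} [Fintype m] [Fintype n] [DecidableEq n] (A : Matrix m n ℝ) : ℝ :=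
  ‖LinearMap.toContinuousLinearMap (Matrix.toEuclideanLin A)‖

/-- Frobenius norm of a real matrix. -/
def frobNorm {m n : Type*} [Fintype m] [Fintype n] (A : Matrix m n ℝ) : ℝ :=
  Real.sqrt (∑ i, ∑ j, (A i j) ^ 2)

/-- Euclidean norm of a finite real vector. -/
def euclNorm {n : Type*} [Fintype n] (v : n → ℝ) : ℝ :=
  Real.sqrt (∑ i, (v i) ^ 2)

/-- Entrywise ReLU on a matrix. -/
def relu {m k : Type*} (M : Matrix m k ℝ) : Matrix m k ℝ := M.map (fun x => max x 0)

/-- Node representations of a GCN: `H_0 = X`, `H_{k+1} = σ(P H_k W_{k+1})`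
(we index weights from `0`, so `W k` is the paper's `W_{k+1}`). -/
def gcnRep {n : ℕ} (d : ℕ → ℕ) (W : ∀ k : ℕ, Matrix (Fin (d k)) (Fin (d (k + 1))) ℝ)
    (P : Matrix (Fin n) (Fin n) ℝ) (X : Matrix (Fin n) (Fin (d 0)) ℝ) :
    (k : ℕ) → Matrix (Fin n) (Fin (d k)) ℝ
  | 0 => X
  | (k + 1) => relu (P * gcnRep d W P X k * W k)

/-- Output (readout) of an `l`-layer GCN: `f_w(G) = H_l = (1/n) 1_n H_{l-1} W_l`. -/
def gcnOut {n : ℕ} (d : ℕ → ℕ) (W : ∀ k : ℕ, Matrix (Fin (d k)) (Fin (d (k + 1))) ℝ)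
    (P : Matrix (Fin n) (Fin n) ℝ) (X : Matrix (Fin n) (Fin (d 0)) ℝ) :
    (l : ℕ) → Fin (d l) → ℝ
  | 0 => fun _ => 0
  | (l + 1) => fun j => (n : ℝ)⁻¹ * ∑ i, (gcnRep d W P X l * W l) i j

/-!
Every layer is controlled in Frobenius norm: ReLU does not increase it, and
`‖A B‖_F ≤ ‖A‖₂ ‖B‖_F`, `‖A B‖_F ≤ ‖A‖_F ‖B‖₂` because the columns (rows) of `A B` are images of
the columns of `B` (rows of `A`) under a single linear map. Hence
`‖H_k‖_F ≤ ‖X‖_F ‖P‖₂^k ∏_{i ≤ k} ‖W_i‖₂`, and the mean readout over the `n` nodes costs the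
factor `1/√n` by Cauchy–Schwarz.
-/

section Norms

variable {m n k : Type*} [Fintype m] [Fintype n] [Fintype k]

lemma euclNorm_nonneg (v : n → ℝ) : 0 ≤ euclNorm v := Real.sqrt_nonneg _

lemma euclNorm_sq (v : n → ℝ) : euclNorm v ^ 2 = ∑ i, v i ^ 2 :=
  Real.sq_sqrt (by positivity)

lemma euclNorm_eq_norm_toLp (v : n → ℝ) :
    euclNorm v = ‖(WithLp.toLp 2 v : EuclideanSpace ℝ n)‖ := by
  simp only [euclNorm, EuclideanSpace.norm_eq, Real.norm_eq_abs, sq_abs]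

lemma frobNorm_nonneg (A : Matrix m n ℝ) : 0 ≤ frobNorm A := Real.sqrt_nonneg _

lemma frobNorm_sq (A : Matrix m n ℝ) : frobNorm A ^ 2 = ∑ j, euclNorm (Aᵀ j) ^ 2 := by
  rw [frobNorm, Real.sq_sqrt (by positivity), Finset.sum_comm]
  simp only [euclNorm_sq, transpose_apply]

lemma frobNorm_transpose (A : Matrix m n ℝ) : frobNorm Aᵀ = frobNorm A := by
  rw [frobNorm, frobNorm, Finset.sum_comm]
  rfl

lemma frobNorm_relu_le (M : Matrix m k ℝ) : frobNorm (relu M) ≤ frobNorm M := by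
  refine Real.sqrt_le_sqrt (Finset.sum_le_sum fun i _ => Finset.sum_le_sum fun j _ => ?_)
  rcases le_total (M i j) 0 with h | h
  · simp [relu, max_eq_right h, sq_nonneg]
  · simp [relu, max_eq_left h]

lemma euclNorm_colMean_le (M : Matrix m k ℝ) :
    euclNorm (fun j => (Fintype.card m : ℝ)⁻¹ * ∑ i, M i j) ≤
      (Real.sqrt (Fintype.card m))⁻¹ * frobNorm M := by
  refine (pow_le_pow_iff_left₀ (euclNorm_nonneg _)
    (mul_nonneg (by positivity) (frobNorm_nonneg M)) two_ne_zero).1 ?_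
  rw [euclNorm_sq, mul_pow, inv_pow, Real.sq_sqrt (Nat.cast_nonneg _), frobNorm_sq,
    Finset.mul_sum]
  gcongr with j
  rw [euclNorm_sq, inv_mul_eq_div, inv_mul_eq_div]
  exact sum_div_card_sq_le_sum_sq_div_card

variable [DecidableEq n]

open scoped Matrix.Norms.L2Operator

lemma specNorm_eq_norm (A : Matrix m n ℝ) : specNorm A = ‖A‖ := rfl

lemma specNorm_nonneg (A : Matrix m n ℝ) : 0 ≤ specNorm A := norm_nonneg _

lemma specNorm_transpose [DecidableEq m] (A : Matrix m n ℝ) : specNorm Aᵀ = specNorm A := by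
  simpa [specNorm_eq_norm, conjTranspose_eq_transpose_of_trivial] using l2_opNorm_conjTranspose A

lemma euclNorm_mulVec_le (A : Matrix m n ℝ) (x : n → ℝ) :
    euclNorm (A *ᵥ x) ≤ specNorm A * euclNorm x := by
  simpa [euclNorm_eq_norm_toLp, specNorm_eq_norm] using l2_opNorm_mulVec A (WithLp.toLp 2 x)

lemma frobNorm_mul_le_specNorm_mul (A : Matrix m n ℝ) (B : Matrix n k ℝ) :
    frobNorm (A * B) ≤ specNorm A * frobNorm B := by
  have hcol : ∀ j, (A * B)ᵀ j = A *ᵥ Bᵀ j := fun j => by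
    ext i; simp [mul_apply, mulVec, dotProduct]
  refine (pow_le_pow_iff_left₀ (frobNorm_nonneg _)
    (mul_nonneg (specNorm_nonneg A) (frobNorm_nonneg B)) two_ne_zero).1 ?_
  rw [frobNorm_sq, mul_pow, frobNorm_sq, Finset.mul_sum]
  gcongr with j
  rw [hcol, ← mul_pow]
  exact pow_le_pow_left₀ (euclNorm_nonneg _) (euclNorm_mulVec_le A _) 2

lemma frobNorm_mul_le_frobNorm_mul_specNorm [DecidableEq k] (A : Matrix m n ℝ)
    (B : Matrix n k ℝ) :
    frobNorm (A * B) ≤ frobNorm A * specNorm B := by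
  calc frobNorm (A * B) = frobNorm (Bᵀ * Aᵀ) := by rw [← transpose_mul, frobNorm_transpose]
    _ ≤ specNorm Bᵀ * frobNorm Aᵀ := frobNorm_mul_le_specNorm_mul _ _
    _ = frobNorm A * specNorm B := by rw [specNorm_transpose, frobNorm_transpose, mul_comm]

end Norms

lemma frobNorm_gcnRep_le {n : ℕ} (d : ℕ → ℕ)
    (W : ∀ k : ℕ, Matrix (Fin (d k)) (Fin (d (k + 1))) ℝ)
    (P : Matrix (Fin n) (Fin n) ℝ) (X : Matrix (Fin n) (Fin (d 0)) ℝ) (k : ℕ) :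
    frobNorm (gcnRep d W P X k) ≤
      frobNorm X * specNorm P ^ k * ∏ i ∈ Finset.range k, specNorm (W i) := by
  induction k with
  | zero => simp [gcnRep]
  | succ k ih =>
    calc frobNorm (gcnRep d W P X (k + 1))
        ≤ specNorm P * frobNorm (gcnRep d W P X k) * specNorm (W k) :=
          (frobNorm_relu_le _).trans <| (frobNorm_mul_le_frobNorm_mul_specNorm _ _).trans <|
            mul_le_mul_of_nonneg_right (frobNorm_mul_le_specNorm_mul _ _) (specNorm_nonneg _)
      _ ≤ specNorm P * (frobNorm X * specNorm P ^ k * ∏ i ∈ Finset.range k, specNorm (W i)) *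
            specNorm (W k) := by gcongr <;> exact specNorm_nonneg _
      _ = frobNorm X * specNorm P ^ (k + 1) * ∏ i ∈ Finset.range (k + 1), specNorm (W i) := by
        rw [Finset.prod_range_succ]; ring

theorem gcnOut_norm_le_general (n l : ℕ) (d : ℕ → ℕ)
    (W : ∀ k : ℕ, Matrix (Fin (d k)) (Fin (d (k + 1))) ℝ)
    (P : Matrix (Fin n) (Fin n) ℝ) (X : Matrix (Fin n) (Fin (d 0)) ℝ) :
    euclNorm (gcnOut d W P X l) ≤
      (Real.sqrt n)⁻¹ * frobNorm X * specNorm P ^ (l - 1) *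
        ∏ i ∈ Finset.range l, specNorm (W i) := by
  rcases l with _ | l
  · simpa [gcnOut, euclNorm] using mul_nonneg (by positivity) (frobNorm_nonneg X)
  set H := gcnRep d W P X l
  calc euclNorm (gcnOut d W P X (l + 1)) ≤ (Real.sqrt n)⁻¹ * frobNorm (H * W l) := by
        simpa [gcnOut] using euclNorm_colMean_le (H * W l)
    _ ≤ (Real.sqrt n)⁻¹ * (frobNorm H * specNorm (W l)) := by
        gcongr; exact frobNorm_mul_le_frobNorm_mul_specNorm _ _
    _ ≤ (Real.sqrt n)⁻¹ * (frobNorm X * specNorm P ^ l *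
          (∏ i ∈ Finset.range l, specNorm (W i)) * specNorm (W l)) := by
        gcongr
        · exact specNorm_nonneg _
        · exact frobNorm_gcnRep_le d W P X l
    _ = _ := by rw [Finset.prod_range_succ, Nat.add_sub_cancel]; ring

/-- Bound on the output of an `l`-layer GCN (with an arbitrary matrix `P` in place of the
graph Laplacian): `‖f_w(G)‖₂ ≤ (1/√n) ‖X‖_F ‖P‖₂^{l-1} ∏_{i=1}^l ‖W_i‖₂`. -/
theorem gcnOut_norm_le (n l : ℕ) (hl : 2 ≤ l) (hn : 0 < n) (d : ℕ → ℕ)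
    (W : ∀ k : ℕ, Matrix (Fin (d k)) (Fin (d (k + 1))) ℝ)
    (P : Matrix (Fin n) (Fin n) ℝ) (X : Matrix (Fin n) (Fin (d 0)) ℝ) :
    euclNorm (gcnOut d W P X l) ≤
      (Real.sqrt n)⁻¹ * frobNorm X * specNorm P ^ (l - 1) *
        ∏ i ∈ Finset.range l, specNorm (W i) :=
  gcnOut_norm_le_general n l d W P X

end
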